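/- arXiv:2601.08387 — 2 statements merged into one kernel-verified Lean document; each statement's English description precedes it below -/
import Mathlib

section
/- Let H_a ∈ F_2^{r_a×n_a} and H_b ∈ F_2^{r_b×n_b}. Define H_1 = (H_a ⊗ I_{n_b} | I_{r_a} ⊗ H_b^T) and H_2 = (I_{n_a} ⊗ H_b | H_a^T ⊗ I_{r_b}). Then H_1 H_2^T = 0. -/
open Matrix

open Kronecker

theorem Matrix.kronecker_transpose {R l m n p : Type*} [Mul R]
    (A : Matrix l m R) (B : Matrix n p R) : (A ⊗ₖ B)ᵀ = Aᵀ ⊗ₖ Bᵀ :=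
  (kroneckerMap_transpose _ A B).symm

-- By the mixed-product property both block products equal `A ⊗ₖ Bᵀ`, so over `F₂` they cancel.
theorem Matrix.fromCols_kronecker_mul_transpose_fromCols_kronecker
    {R ra na rb nb : Type*} [CommSemiring R] [Fintype na] [Fintype nb] [Fintype ra] [Fintype rb]
    [DecidableEq na] [DecidableEq nb] [DecidableEq ra] [DecidableEq rb]
    (A : Matrix ra na R) (B : Matrix rb nb R) :
    fromCols (A ⊗ₖ (1 : Matrix nb nb R)) ((1 : Matrix ra ra R) ⊗ₖ Bᵀ) *
        (fromCols ((1 : Matrix na na R) ⊗ₖ B) (Aᵀ ⊗ₖ (1 : Matrix rb rb R)))ᵀ =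
      A ⊗ₖ Bᵀ + A ⊗ₖ Bᵀ := by
  rw [transpose_fromCols, fromCols_mul_fromRows, kronecker_transpose, kronecker_transpose,
    transpose_one, transpose_one, transpose_transpose, ← mul_kronecker_mul,
    ← mul_kronecker_mul, Matrix.mul_one, Matrix.one_mul, Matrix.mul_one, Matrix.one_mul]

/-- Hypergraph product construction: `H₁ H₂ᵀ = 0` over `F₂`. -/
theorem stmt2 {ra na rb nb : ℕ}
    (Ha : Matrix (Fin ra) (Fin na) (ZMod 2)) (Hb : Matrix (Fin rb) (Fin nb) (ZMod 2)) :
    Matrix.fromCols (Ha ⊗ₖ (1 : Matrix (Fin nb) (Fin nb) (ZMod 2)))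
        ((1 : Matrix (Fin ra) (Fin ra) (ZMod 2)) ⊗ₖ Hbᵀ) *
      (Matrix.fromCols ((1 : Matrix (Fin na) (Fin na) (ZMod 2)) ⊗ₖ Hb)
        (Haᵀ ⊗ₖ (1 : Matrix (Fin rb) (Fin rb) (ZMod 2))))ᵀ = 0 := by
  rw [fromCols_kronecker_mul_transpose_fromCols_kronecker]
  ext i j
  exact CharTwo.add_self_eq_zero _
end

section
/- Fix n, r, v ∈ ℕ with v, r ≤ n. Let H ∈ F_2^{r×n} be a random matrix whose r rows are independent uniform samples from the Hamming sphere of radius v. For any w ≤ n, the expected number of vectors c ∈ F_2^n with Hamming weight w satisfying H c^T = 0 equals m_w = C(n,w)·ρ_w^r, where ρ_w = Σ_{i even, 0 ≤ i ≤ min(w,v)} C(v,i)·C(n−v,w−i) / C(n,w). -/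
/-- The probability that a uniform weight-`v` row is orthogonal to a fixed weight-`w`
vector. -/
def rho (n v w : ℕ) : ℚ :=
  ∑ i ∈ Finset.range (min w v + 1),
    if Even i then (v.choose i * (n - v).choose (w - i) : ℚ) / (n.choose w : ℚ) else 0

/-!
Swapping the two sums turns the total count into a sum over the weight-`w` vectors `c` of the
number of matrices killing `c`; since the rows are chosen independently, that number is the
`r`-th power of the number of weight-`v` rows orthogonal to `c`. Over `ZMod 2` a row `h` is
orthogonal to `c` exactly when their supports meet in an even number of points, and the
weight-`v` sets meeting a fixed `w`-set in `i` points number `C(w,i)·C(n-w,v-i)`. The symmetry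
`C(n,v)·C(v,i)·C(n-v,w-i) = C(n,w)·C(w,i)·C(n-w,v-i)` (both count pairs of a `v`-set and a
`w`-set meeting in `i` points) converts this into the form of `rho`.
-/

open Finset Matrix

section Subsets

variable {α : Type*} [Fintype α] [DecidableEq α]

theorem card_filter_card_eq_and_card_inter_eq (S : Finset α) {a i : ℕ} (hi : i ≤ a) :
    #{s : Finset α | #s = a ∧ #(s ∩ S) = i}
      = (#S).choose i * (Fintype.card α - #S).choose (a - i) := by
  rw [← card_powersetCard i S, ← card_compl S, ← card_powersetCard (a - i) Sᶜ, ← card_product]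
  refine card_nbij' (fun s => (s ∩ S, s \ S)) (fun p => p.1 ∪ p.2) ?_ ?_ ?_ ?_
  · intro s hs
    simp only [coe_filter, mem_univ, true_and, Set.mem_ofPred_eq] at hs
    have := card_inter_add_card_sdiff s S
    simp only [coe_product, Set.mem_prod, mem_coe, mem_powersetCard]
    refine ⟨⟨inter_subset_right, hs.2⟩, fun x hx => by simp_all, by omega⟩
  · rintro ⟨A, B⟩ hAB
    simp only [coe_product, Set.mem_prod, mem_coe, mem_powersetCard,
      subset_compl_iff_disjoint_right] at hAB
    obtain ⟨⟨hAS, hA⟩, hBS, hB⟩ := hAB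
    simp only [coe_filter, Set.mem_ofPred_eq, mem_univ, true_and]
    rw [card_union_of_disjoint (hBS.symm.mono_left hAS), union_inter_distrib_right,
      inter_eq_left.2 hAS, disjoint_iff_inter_eq_empty.1 hBS, union_empty]
    exact ⟨by omega, hA⟩
  · intro s _
    exact sup_inf_sdiff s S
  · rintro ⟨A, B⟩ hAB
    simp only [coe_product, Set.mem_prod, mem_coe, mem_powersetCard,
      subset_compl_iff_disjoint_right] at hAB
    obtain ⟨⟨hAS, -⟩, hBS, -⟩ := hAB
    dsimp only
    rw [union_inter_distrib_right, inter_eq_left.2 hAS, disjoint_iff_inter_eq_empty.1 hBS,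
      union_empty, union_sdiff_distrib, sdiff_eq_empty_iff_subset.2 hAS, hBS.sdiff_eq_left,
      empty_union]

theorem card_filter_card_eq_and_even_card_inter (S : Finset α) (a : ℕ) :
    #{s : Finset α | #s = a ∧ Even #(s ∩ S)}
      = ∑ i ∈ range (min #S a + 1),
          if Even i then (#S).choose i * (Fintype.card α - #S).choose (a - i) else 0 := by
  rw [card_eq_sum_card_fiberwise (f := fun s => #(s ∩ S)) (t := range (min #S a + 1))]
  · refine sum_congr rfl fun i hi => ?_
    rw [filter_filter]
    split_ifs with he
    · rw [← card_filter_card_eq_and_card_inter_eq S (i := i) (by simp at hi; omega)]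
      congr 1
      ext s
      simp only [mem_filter, mem_univ, true_and]
      grind
    · rw [card_eq_zero, filter_eq_empty_iff]
      grind
  · intro s hs
    simp only [coe_filter, mem_univ, true_and, Set.mem_ofPred_eq, coe_range, Set.mem_Iio] at hs ⊢
    have := card_le_card (inter_subset_left (s₁ := s) (s₂ := S))
    have := card_le_card (inter_subset_right (s₁ := s) (s₂ := S))
    omega

end Subsets

section ZModTwo

def funZModTwoEquivFinset (ι : Type*) [Fintype ι] [DecidableEq ι] : (ι → ZMod 2) ≃ Finset ι where
  toFun h := {j | h j ≠ 0}
  invFun s j := if j ∈ s then 1 else 0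
  left_inv h := by
    funext j
    have h01 : ∀ x : ZMod 2, x = 0 ∨ x = 1 := by decide
    rcases h01 (h j) with hj | hj <;> simp [hj]
  right_inv s := by ext; simp

variable {ι : Type*} [Fintype ι] [DecidableEq ι]

theorem hammingNorm_eq_card_funZModTwoEquivFinset (h : ι → ZMod 2) :
    hammingNorm h = #(funZModTwoEquivFinset ι h) := rfl

theorem dotProduct_eq_zero_iff_even_card_inter (h c : ι → ZMod 2) :
    h ⬝ᵥ c = 0 ↔ Even #(funZModTwoEquivFinset ι h ∩ funZModTwoEquivFinset ι c) := by
  have hmul : ∀ x y : ZMod 2, x * y = if x ≠ 0 ∧ y ≠ 0 then 1 else 0 := by decide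
  rw [← ZMod.natCast_eq_zero_iff_even, dotProduct]
  simp_rw [hmul]
  rw [sum_boole]
  simp [funZModTwoEquivFinset, filter_and]

theorem card_filter_hammingNorm_eq (w : ℕ) :
    #{c : ι → ZMod 2 | hammingNorm c = w} = (Fintype.card ι).choose w := by
  rw [← card_univ, ← card_powersetCard]
  exact card_equiv (funZModTwoEquivFinset ι) fun c => by
    rw [mem_filter_univ, mem_powersetCard_univ, hammingNorm_eq_card_funZModTwoEquivFinset]

theorem card_filter_hammingNorm_eq_and_dotProduct_eq_zero {c : ι → ZMod 2} {w : ℕ}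
    (hc : hammingNorm c = w) (v : ℕ) :
    #{h : ι → ZMod 2 | hammingNorm h = v ∧ h ⬝ᵥ c = 0}
      = ∑ i ∈ range (min w v + 1),
          if Even i then w.choose i * (Fintype.card ι - w).choose (v - i) else 0 := by
  rw [← hc, hammingNorm_eq_card_funZModTwoEquivFinset,
    ← card_filter_card_eq_and_even_card_inter]
  exact card_equiv (funZModTwoEquivFinset ι) fun h => by
    simp [hammingNorm_eq_card_funZModTwoEquivFinset, dotProduct_eq_zero_iff_even_card_inter]

end ZModTwo

theorem sum_card_filter_mulVec_eq_zero {m ι R : Type*} [Fintype m] [DecidableEq m] [Fintype ι]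
    [NonUnitalNonAssocSemiring R] [DecidableEq R] (A W : Finset (ι → R)) :
    ∑ H ∈ Fintype.piFinset (fun _ : m => A), #{c ∈ W | Matrix.of H *ᵥ c = 0}
      = ∑ c ∈ W, #{h ∈ A | h ⬝ᵥ c = 0} ^ Fintype.card m := by
  refine (sum_card_bipartiteAbove_eq_sum_card_bipartiteBelow _).trans (sum_congr rfl fun c _ => ?_)
  have hrows : {H ∈ Fintype.piFinset (fun _ : m => A) | Matrix.of H *ᵥ c = 0}
      = Fintype.piFinset fun _ : m => {h ∈ A | h ⬝ᵥ c = 0} := by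
    ext H
    simp [Fintype.mem_piFinset, funext_iff, Matrix.mulVec, forall_and]
  rw [bipartiteBelow, hrows, Fintype.card_piFinset, prod_const, card_univ]

theorem sum_card_filter_hammingNorm_eq_and_mulVec_eq_zero {m ι : Type*} [Fintype m]
    [DecidableEq m] [Fintype ι] [DecidableEq ι] (v w : ℕ) :
    ∑ H ∈ Fintype.piFinset (fun _ : m => {h : ι → ZMod 2 | hammingNorm h = v}),
        #{c | hammingNorm c = w ∧ Matrix.of H *ᵥ c = 0}
      = (Fintype.card ι).choose w * (∑ i ∈ range (min w v + 1),
          if Even i then w.choose i * (Fintype.card ι - w).choose (v - i) else 0)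
            ^ Fintype.card m := by
  simp_rw [← filter_filter]
  rw [sum_card_filter_mulVec_eq_zero, sum_congr rfl fun c hc => by
    rw [filter_filter, card_filter_hammingNorm_eq_and_dotProduct_eq_zero (mem_filter.1 hc).2],
    sum_const, card_filter_hammingNorm_eq, smul_eq_mul]

theorem Nat.choose_mul_choose_sub_comm (m a b : ℕ) :
    m.choose a * (m - a).choose b = m.choose b * (m - b).choose a := by
  by_cases h : a + b ≤ m
  · have ha := Nat.choose_mul (n := m) (Nat.le_add_right a b)
    have hb := Nat.choose_mul (n := m) (Nat.le_add_left b a)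
    rw [Nat.add_sub_cancel_left] at ha
    rw [Nat.add_sub_cancel] at hb
    rw [← ha, ← hb, Nat.choose_symm_add]
  · have zero_of_lt {x y : ℕ} (hxy : m < x + y) : m.choose x * (m - x).choose y = 0 := by
      rcases le_or_gt x m with hx | hx
      · rw [Nat.choose_eq_zero_of_lt (by omega : m - x < y), mul_zero]
      · rw [Nat.choose_eq_zero_of_lt hx, zero_mul]
    rw [zero_of_lt (by omega), zero_of_lt (by omega)]

theorem Nat.choose_mul_choose_mul_choose_sub_comm {n v w i : ℕ} (hiv : i ≤ v) (hiw : i ≤ w) :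
    n.choose v * (v.choose i * (n - v).choose (w - i))
      = n.choose w * (w.choose i * (n - w).choose (v - i)) := by
  rw [← mul_assoc, Nat.choose_mul hiv, ← mul_assoc, Nat.choose_mul hiw, mul_assoc, mul_assoc,
    show n - v = n - i - (v - i) by omega, show n - w = n - i - (w - i) by omega,
    Nat.choose_mul_choose_sub_comm]

theorem rho_mul_choose {n v w : ℕ} (hw : w ≤ n) :
    rho n v w * n.choose v = ((∑ i ∈ range (min w v + 1),
        if Even i then w.choose i * (n - w).choose (v - i) else 0 : ℕ) : ℚ) := by
  rw [rho, sum_mul, Nat.cast_sum]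
  refine sum_congr rfl fun i hi => ?_
  obtain ⟨hiw, hiv⟩ := le_min_iff.1 (Nat.lt_succ_iff.1 (mem_range.1 hi))
  split_ifs
  · rw [div_mul_eq_mul_div, div_eq_iff (Nat.cast_ne_zero.2 (Nat.choose_pos hw).ne'), mul_comm,
      mul_comm _ (n.choose w : ℚ)]
    exact_mod_cast Nat.choose_mul_choose_mul_choose_sub_comm hiv hiw
  · simp

theorem stmt5_general (n r v w : ℕ) (hv : v ≤ n) (hw : w ≤ n) :
    (∑ H ∈ Finset.univ.filter (fun H : Fin r → Fin n → ZMod 2 =>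
          ∀ i, hammingNorm (H i) = v),
        ((Finset.univ.filter (fun c : Fin n → ZMod 2 =>
            hammingNorm c = w ∧ Matrix.mulVec (Matrix.of H) c = 0)).card : ℚ))
      / ((n.choose v : ℚ)) ^ r
      = (n.choose w : ℚ) * (rho n v w) ^ r := by
  have hrows : ({H : Fin r → Fin n → ZMod 2 | ∀ i, hammingNorm (H i) = v} : Finset _)
      = Fintype.piFinset fun _ => {h | hammingNorm h = v} := by
    ext H
    simp [Fintype.mem_piFinset]
  have hcv : (n.choose v : ℚ) ≠ 0 := Nat.cast_ne_zero.2 (Nat.choose_pos hv).ne'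
  rw [← Nat.cast_sum, hrows, sum_card_filter_hammingNorm_eq_and_mulVec_eq_zero,
    Fintype.card_fin, Fintype.card_fin, Nat.cast_mul, Nat.cast_pow, ← rho_mul_choose hw,
    mul_pow, mul_div_assoc, mul_div_cancel_right₀ _ (pow_ne_zero r hcv)]

/-- For `H` with `r` rows i.i.d. uniform on the weight-`v` Hamming sphere, the expected
number of weight-`w` vectors in the right kernel of `H` equals `C(n,w)·ρ_w^r`. -/
theorem stmt5 (n r v w : ℕ) (hv : v ≤ n) (hr : r ≤ n) (hw : w ≤ n) :
    (∑ H ∈ Finset.univ.filter (fun H : Fin r → Fin n → ZMod 2 =>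
          ∀ i, hammingNorm (H i) = v),
        ((Finset.univ.filter (fun c : Fin n → ZMod 2 =>
            hammingNorm c = w ∧ Matrix.mulVec (Matrix.of H) c = 0)).card : ℚ))
      / ((n.choose v : ℚ)) ^ r
      = (n.choose w : ℚ) * (rho n v w) ^ r :=
  stmt5_general n r v w hv hw
end
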